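/- Let 1 ≤ s ≤ p and m ≥ s be natural numbers, and let x : Fin m → ℝ^p be any m points in ℝ^p. Then the number of distinct Boolean vectors (1(⟨w, x₁⟩ ≥ 0), …, 1(⟨w, x_m⟩ ≥ 0)) realized as w ranges over the s-sparse vectors {w ∈ ℝ^p : ‖w‖₀ ≤ s} is at most C(p, s)·(e·m/s)^s, and hence at most (e·p·m/s)^s. -/

import Mathlib

open scoped BigOperators

/-- The set of dichotomies induced on the points `x` by homogeneous halfspaces with
normal vectors ranging over `W`. -/
def dichotomies {p m : ℕ} (W : Set (Fin p → ℝ)) (x : Fin m → (Fin p → ℝ)) :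
    Set (Fin m → Bool) :=
  {b | ∃ w ∈ W, ∀ i, b i = decide (0 ≤ ∑ k, w k * x i k)}

/-!
An `s`-sparse `w` lies in the span of `s` coordinate vectors, so the dichotomies are covered by
`C(p, s)` families, each cut out by signs of an at most `s`-dimensional space of functions on the
points. Such a space shatters no set `T` of more than `s` points: the evaluations at the points of
`T` are then linearly dependent, `∑ g i f i = 0` on the space, and the pattern `{i ∈ T | g i ≤ 0}`
cannot be realised, since it would make every term `≤ 0` and one term `< 0`. By the Sauer–Shelah
lemma each family has at most `∑_{k ≤ s} C(m, k) ≤ (e m / s)^s` members.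
-/

open Finset Module

theorem sum_choose_le_exp_mul_div_pow {s m : ℕ} (hsm : s ≤ m) :
    ((∑ k ∈ Iic s, m.choose k : ℕ) : ℝ) ≤ (Real.exp 1 * m / s) ^ s := by
  rcases s.eq_zero_or_pos with rfl | hs
  · rw [← bot_eq_zero, Iic_bot]
    simp
  have hm : (0 : ℝ) < m := by exact_mod_cast hs.trans_le hsm
  set t : ℝ := s / m
  have ht : 0 < t := by positivity
  have ht1 : t ≤ 1 := div_le_one_of_le₀ (by exact_mod_cast hsm) hm.le
  have key : ((∑ k ∈ Iic s, m.choose k : ℕ) : ℝ) * t ^ s ≤ Real.exp 1 ^ s :=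
    calc ((∑ k ∈ Iic s, m.choose k : ℕ) : ℝ) * t ^ s
        = ∑ k ∈ Iic s, t ^ s * m.choose k := by push_cast; rw [sum_mul]; simp_rw [mul_comm]
      _ ≤ ∑ k ∈ Iic s, t ^ k * m.choose k := sum_le_sum fun k hk =>
        mul_le_mul_of_nonneg_right (pow_le_pow_of_le_one ht.le ht1 (mem_Iic.1 hk)) (by positivity)
      _ ≤ ∑ k ∈ range (m + 1), t ^ k * m.choose k := by
        refine sum_le_sum_of_subset_of_nonneg (fun k hk => ?_) fun _ _ _ => by positivity
        simp only [mem_Iic, mem_range] at hk ⊢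
        omega
      _ = (t + 1) ^ m := by simp [add_pow]
      _ ≤ Real.exp t ^ m := by gcongr; exact Real.add_one_le_exp t
      _ = Real.exp 1 ^ s := by
        rw [← Real.exp_nat_mul, ← Real.exp_nat_mul, mul_div_cancel₀ _ hm.ne', mul_one]
  calc ((∑ k ∈ Iic s, m.choose k : ℕ) : ℝ) ≤ Real.exp 1 ^ s / t ^ s := by
        rwa [le_div_iff₀ (by positivity)]
    _ = (Real.exp 1 * m / s) ^ s := by rw [← div_pow, div_div_eq_mul_div]

theorem Finset.Shatters.card_le_finrank {ι : Type*} [DecidableEq ι] {F : Submodule ℝ (ι → ℝ)}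
    [FiniteDimensional ℝ F] {𝒜 : Finset (Finset ι)}
    (h𝒜 : ∀ u ∈ 𝒜, ∃ f ∈ F, ∀ i, i ∈ u ↔ 0 ≤ f i) {T : Finset ι} (hT : 𝒜.Shatters T) :
    #T ≤ finrank ℝ F := by
  by_contra! hT_card
  let ev : ι → Dual ℝ F := fun i => (LinearMap.proj i).comp F.subtype
  have h_dep : ¬ LinearIndepOn ℝ ev (T : Set ι) := fun h_ind => by
    have := h_ind.fintype_card_le_finrank
    rw [Subspace.dual_finrank_eq] at this
    simp only [Finset.coe_sort_coe, Fintype.card_coe] at this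
    omega
  obtain ⟨g, hg, i₀, hi₀T, hi₀⟩ := not_linearIndepOn_finset_iff.1 h_dep
  wlog hpos : 0 < g i₀ generalizing g
  · refine this (-g) (by simp [hg]) (neg_ne_zero.2 hi₀) ?_
    exact neg_pos.2 (lt_of_le_of_ne (not_lt.1 hpos) hi₀)
  obtain ⟨u, hu𝒜, hTu⟩ := hT (filter_subset (fun i => g i ≤ 0) T)
  obtain ⟨f, hfF, hf⟩ := h𝒜 u hu𝒜
  have h_sign : ∀ i ∈ T, (0 ≤ f i ↔ g i ≤ 0) := fun i hi => by
    simpa [hi, hf] using Finset.ext_iff.1 hTu i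
  have h_neg_of_pos : ∀ i ∈ T, 0 < g i → f i < 0 := fun i hi hgi =>
    not_le.1 (mt (h_sign i hi).1 hgi.not_ge)
  have h_sum : ∑ i ∈ T, g i * f i = 0 := by
    simpa [ev] using congr($hg ⟨f, hfF⟩)
  have h_neg : ∑ i ∈ T, g i * f i < 0 := by
    refine sum_neg' (fun i hi => ?_)
      ⟨i₀, hi₀T, mul_neg_of_pos_of_neg hpos (h_neg_of_pos i₀ hi₀T hpos)⟩
    rcases le_or_gt (g i) 0 with hgi | hgi
    · exact mul_nonpos_of_nonpos_of_nonneg hgi ((h_sign i hi).2 hgi)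
    · exact (mul_neg_of_pos_of_neg hgi (h_neg_of_pos i hi hgi)).le
  exact h_sum.not_lt h_neg

theorem ncard_dichotomies_le_sum_choose {p m : ℕ} (U : Submodule ℝ (Fin p → ℝ))
    (x : Fin m → Fin p → ℝ) :
    (dichotomies (U : Set (Fin p → ℝ)) x).ncard ≤ ∑ k ∈ Iic (finrank ℝ U), m.choose k := by
  classical
  -- the image of `U` under `w ↦ (∑ k, w k * x i k)ᵢ`
  let F := U.map (Matrix.vecMulLinear (Matrix.of x).transpose)
  let 𝒜 := (Set.toFinite (dichotomies (U : Set (Fin p → ℝ)) x)).toFinset.image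
    fun b => univ.filter (b · = true)
  have h_card : (dichotomies (U : Set (Fin p → ℝ)) x).ncard = #𝒜 := by
    rw [Set.ncard_eq_toFinset_card _ (Set.toFinite _), card_image_of_injective]
    intro b b' h
    funext i
    simpa using congr(i ∈ $h)
  have h𝒜 : ∀ u ∈ 𝒜, ∃ f ∈ F, ∀ i, i ∈ u ↔ 0 ≤ f i := by
    simp only [𝒜, mem_image, Set.Finite.mem_toFinset]
    rintro _ ⟨b, ⟨w, hwU, hbw⟩, rfl⟩
    exact ⟨_, Submodule.mem_map_of_mem hwU, fun i => by
      simp only [mem_filter, mem_univ, true_and, hbw, decide_eq_true_eq]; rfl⟩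
  have h_vcDim : 𝒜.vcDim ≤ finrank ℝ U :=
    Finset.sup_le fun T hT => ((mem_shatterer.1 hT).card_le_finrank h𝒜).trans (U.finrank_map_le _)
  calc (dichotomies (U : Set (Fin p → ℝ)) x).ncard = #𝒜 := h_card
    _ ≤ #𝒜.shatterer := card_le_card_shatterer 𝒜
    _ ≤ ∑ k ∈ Iic 𝒜.vcDim, (Fintype.card (Fin m)).choose k := card_shatterer_le_sum_vcDim
    _ ≤ ∑ k ∈ Iic (finrank ℝ U), m.choose k := by
      rw [Fintype.card_fin]
      exact sum_le_sum_of_subset (Iic_subset_Iic.2 h_vcDim)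

theorem dichotomies_mono {p m : ℕ} {W W' : Set (Fin p → ℝ)} (h : W ⊆ W') (x : Fin m → Fin p → ℝ) :
    dichotomies W x ⊆ dichotomies W' x :=
  fun _ ⟨w, hw, hb⟩ => ⟨w, h hw, hb⟩

theorem dichotomies_biUnion {p m : ℕ} {α : Type*} (t : Finset α) (W : α → Set (Fin p → ℝ))
    (x : Fin m → Fin p → ℝ) :
    dichotomies (⋃ a ∈ t, W a) x = ⋃ a ∈ t, dichotomies (W a) x := by
  ext b
  simp only [dichotomies, Set.mem_iUnion, Set.mem_ofPred_eq, exists_prop]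
  grind

theorem mem_span_single_of_forall_notMem_eq_zero {ι R : Type*} [Fintype ι] [DecidableEq ι]
    [Semiring R] {S : Finset ι} {w : ι → R} (hw : ∀ k ∉ S, w k = 0) :
    w ∈ Submodule.span R (Set.range fun k : S => Pi.single (k : ι) (1 : R)) := by
  rw [pi_eq_sum_univ' w]
  refine Submodule.sum_mem _ fun k _ => ?_
  by_cases hk : k ∈ S
  · exact Submodule.smul_mem _ _ (Submodule.subset_span ⟨⟨k, hk⟩, rfl⟩)
  · simp [hw k hk]

theorem ncard_dichotomies_sparse_le {p m s : ℕ} (hsp : s ≤ p) (x : Fin m → Fin p → ℝ) :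
    (dichotomies {w : Fin p → ℝ | #(univ.filter fun i => w i ≠ 0) ≤ s} x).ncard
      ≤ p.choose s * ∑ k ∈ Iic s, m.choose k := by
  classical
  let V : Finset (Fin p) → Submodule ℝ (Fin p → ℝ) := fun S =>
    Submodule.span ℝ (Set.range fun k : S => Pi.single (k : Fin p) 1)
  have h_cover : {w : Fin p → ℝ | #(univ.filter fun i => w i ≠ 0) ≤ s}
      ⊆ ⋃ S ∈ powersetCard s univ, (V S : Set (Fin p → ℝ)) := by
    intro w hw
    obtain ⟨S, h_supp, -, hS⟩ := exists_subsuperset_card_eq (subset_univ _) hw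
      (by rwa [card_univ, Fintype.card_fin])
    refine Set.mem_biUnion (mem_powersetCard_univ.2 hS)
      (mem_span_single_of_forall_notMem_eq_zero fun k hk => ?_)
    by_contra hwk
    exact hk (h_supp (by simpa using hwk))
  calc _ ≤ (⋃ S ∈ powersetCard s univ, dichotomies (V S : Set (Fin p → ℝ)) x).ncard := by
        rw [← dichotomies_biUnion]
        exact Set.ncard_le_ncard (dichotomies_mono h_cover x) (Set.toFinite _)
    _ ≤ ∑ S ∈ powersetCard s univ, (dichotomies (V S : Set (Fin p → ℝ)) x).ncard :=
        set_ncard_biUnion_le _ _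
    _ ≤ ∑ _S ∈ powersetCard s (univ : Finset (Fin p)), ∑ k ∈ Iic s, m.choose k := by
        refine sum_le_sum fun S hS => (ncard_dichotomies_le_sum_choose _ x).trans ?_
        refine sum_le_sum_of_subset (Iic_subset_Iic.2 ((finrank_range_le_card _).trans ?_))
        simp [(mem_powersetCard.1 hS).2]
    _ = p.choose s * ∑ k ∈ Iic s, m.choose k := by simp

theorem stmt7_general (p s m : ℕ) (hsp : s ≤ p) (hm : s ≤ m)
    (x : Fin m → (Fin p → ℝ)) :
    (((dichotomies {w : Fin p → ℝ |
        (Finset.univ.filter fun i => w i ≠ 0).card ≤ s} x).ncard : ℝ)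
      ≤ (p.choose s : ℝ) * (Real.exp 1 * m / s) ^ s)
    ∧ (((dichotomies {w : Fin p → ℝ |
        (Finset.univ.filter fun i => w i ≠ 0).card ≤ s} x).ncard : ℝ)
      ≤ (Real.exp 1 * p * m / s) ^ s) := by
  have h_count : ((dichotomies {w : Fin p → ℝ |
      (Finset.univ.filter fun i => w i ≠ 0).card ≤ s} x).ncard : ℝ)
      ≤ (p.choose s : ℝ) * (Real.exp 1 * m / s) ^ s :=
    calc _ ≤ ((p.choose s * ∑ k ∈ Iic s, m.choose k : ℕ) : ℝ) := by
          exact_mod_cast ncard_dichotomies_sparse_le hsp x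
      _ ≤ (p.choose s : ℝ) * (Real.exp 1 * m / s) ^ s := by
          rw [Nat.cast_mul]
          gcongr
          exact sum_choose_le_exp_mul_div_pow hm
  refine ⟨h_count, h_count.trans ?_⟩
  calc (p.choose s : ℝ) * (Real.exp 1 * m / s) ^ s
      ≤ (p : ℝ) ^ s * (Real.exp 1 * m / s) ^ s := by gcongr; exact_mod_cast p.choose_le_pow s
    _ = (Real.exp 1 * p * m / s) ^ s := by rw [← mul_pow]; ring

/-- For `1 ≤ s ≤ p`, `m ≥ s`, and any `m` points in ℝ^p, the number of
dichotomies realized by `x ↦ 1(⟨w, x⟩ ≥ 0)` as `w` ranges over the `s`-sparse vectors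
is at most `C(p, s)·(e·m/s)^s`, and hence at most `(e·p·m/s)^s`. -/
theorem stmt7 (p s m : ℕ) (hs : 1 ≤ s) (hsp : s ≤ p) (hm : s ≤ m)
    (x : Fin m → (Fin p → ℝ)) :
    (((dichotomies {w : Fin p → ℝ |
        (Finset.univ.filter fun i => w i ≠ 0).card ≤ s} x).ncard : ℝ)
      ≤ (p.choose s : ℝ) * (Real.exp 1 * m / s) ^ s)
    ∧ (((dichotomies {w : Fin p → ℝ |
        (Finset.univ.filter fun i => w i ≠ 0).card ≤ s} x).ncard : ℝ)
      ≤ (Real.exp 1 * p * m / s) ^ s) :=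
  stmt7_general p s m hsp hm x
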